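/- arXiv:2310.10135 — 2 statements merged into one kernel-verified Lean document; each statement's English description precedes it below -/
import Mathlib

section
/- Let Φ be a Young function with complementary function Φ̄, let Q₀ be a dyadic cube, and let 𝒯 be a collection of pairwise disjoint dyadic cubes partitioning Q₀. Then for any measurable g, ∑_{Q ∈ 𝒯} |Q|·‖g‖_{Φ̄;Q} ≤ 2|Q₀|·‖g‖_{Φ̄;Q₀}, where ‖g‖_{Φ̄;Q} is the normalized Luxemburg norm over Q. -/
open Set Filter MeasureTheory
open scoped ENNReal

/-- The dyadic cube `2^(−k)(j + [0,1)ⁿ)` for `k : ℤ`, `j : Fin n → ℤ`. -/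
def dyadicCube (n : ℕ) (k : ℤ) (j : Fin n → ℤ) : Set (Fin n → ℝ) :=
  {x | ∀ i, (j i : ℝ) * 2 ^ (-k) ≤ x i ∧ x i < ((j i : ℝ) + 1) * 2 ^ (-k)}

/-- The complementary (Legendre–Fenchel) function `Φ̄(s) = sup {s·t − Φ(t) : t ≥ 0}`,
with values in `[0, ∞]`. -/
noncomputable def complYoung (Φ : ℝ → ℝ) (s : ℝ) : ℝ≥0∞ :=
  ⨆ (t : ℝ) (_ : 0 ≤ t), ENNReal.ofReal (s * t - Φ t)

/-- The normalized Luxemburg norm over `Q` with respect to an `[0,∞]`-valued Young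
function `Ψ`: `inf {λ > 0 : (1/|Q|) ∫_Q Ψ(|g|/λ) ≤ 1}`. -/
noncomputable def luxNormOnE {n : ℕ} (Ψ : ℝ → ℝ≥0∞) (Q : Set (Fin n → ℝ))
    (g : (Fin n → ℝ) → ℝ) : ℝ≥0∞ :=
  sInf {l : ℝ≥0∞ | ∃ r : ℝ, 0 < r ∧ l = ENNReal.ofReal r ∧
    (volume Q)⁻¹ * ∫⁻ x in Q, Ψ (|g x| / r) ≤ 1}

lemma dyadicCube_eq_pi (n : ℕ) (k : ℤ) (j : Fin n → ℤ) :
    dyadicCube n k j =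
      Set.pi Set.univ (fun i => Ico ((j i : ℝ) * 2 ^ (-k)) (((j i : ℝ) + 1) * 2 ^ (-k))) := by
  ext x
  simp [dyadicCube, Set.mem_pi, Set.mem_Ico]

lemma measurableSet_dyadicCube (n : ℕ) (k : ℤ) (j : Fin n → ℤ) :
    MeasurableSet (dyadicCube n k j) := by
  rw [dyadicCube_eq_pi]
  exact MeasurableSet.univ_pi fun i => measurableSet_Ico

lemma volume_dyadicCube (n : ℕ) (k : ℤ) (j : Fin n → ℤ) :
    volume (dyadicCube n k j) = ENNReal.ofReal ((2:ℝ) ^ (-k)) ^ n := by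
  rw [dyadicCube_eq_pi, volume_pi_pi]
  have h : ∀ i : Fin n, ((j i : ℝ) + 1) * 2 ^ (-k) - (j i : ℝ) * 2 ^ (-k) = 2 ^ (-k) :=
    fun i => by ring
  simp only [Real.volume_Ico, h]
  rw [Finset.prod_const, Finset.card_univ, Fintype.card_fin]

lemma volume_dyadicCube_ne_zero (n : ℕ) (k : ℤ) (j : Fin n → ℤ) :
    volume (dyadicCube n k j) ≠ 0 := by
  rw [volume_dyadicCube]
  have h2 : (0:ℝ) < (2:ℝ) ^ (-k) := zpow_pos (by norm_num) _
  exact pow_ne_zero _ (ENNReal.ofReal_pos.2 h2).ne'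

lemma volume_dyadicCube_ne_top (n : ℕ) (k : ℤ) (j : Fin n → ℤ) :
    volume (dyadicCube n k j) ≠ ∞ := by
  rw [volume_dyadicCube]
  exact ENNReal.pow_ne_top ENNReal.ofReal_ne_top

/-- Convexity-type scaling inequality for the complementary function. -/
lemma complYoung_div_le (Φ : ℝ → ℝ) (hΦ : ∀ t : ℝ, 0 ≤ t → 0 ≤ Φ t)
    (s : ℝ) {c : ℝ} (hc : 0 ≤ c) :
    complYoung Φ (s / (1 + c)) ≤ complYoung Φ s / ENNReal.ofReal (1 + c) := by
  have h1c : (0:ℝ) < 1 + c := by linarith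
  refine iSup₂_le fun t ht => ?_
  have key : s / (1 + c) * t - Φ t ≤ (s * t - Φ t) / (1 + c) := by
    rw [sub_div, div_mul_eq_mul_div]
    have : Φ t / (1 + c) ≤ Φ t := div_le_self (hΦ t ht) (by linarith)
    linarith
  calc ENNReal.ofReal (s / (1 + c) * t - Φ t)
      ≤ ENNReal.ofReal ((s * t - Φ t) / (1 + c)) := ENNReal.ofReal_le_ofReal key
    _ = ENNReal.ofReal (s * t - Φ t) / ENNReal.ofReal (1 + c) :=
        ENNReal.ofReal_div_of_pos h1c
    _ ≤ complYoung Φ s / ENNReal.ofReal (1 + c) := by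
        gcongr
        exact le_iSup₂ (f := fun t (_ : (0:ℝ) ≤ t) => ENNReal.ofReal (s * t - Φ t)) t ht

/-- Amemiya-type one-cube estimate. -/
lemma cube_bound {n : ℕ} (Φ : ℝ → ℝ) (hΦ : ∀ t : ℝ, 0 ≤ t → 0 ≤ Φ t)
    (Q : Set (Fin n → ℝ)) (hQ0 : volume Q ≠ 0) (hQt : volume Q ≠ ∞)
    (g : (Fin n → ℝ) → ℝ) (r : ℝ) (hr : 0 < r)
    (hA : (∫⁻ x in Q, complYoung Φ (|g x| / r)) ≠ ∞) :
    volume Q * luxNormOnE (complYoung Φ) Q g ≤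
      ENNReal.ofReal r * (volume Q + ∫⁻ x in Q, complYoung Φ (|g x| / r)) := by
  set A : ℝ≥0∞ := ∫⁻ x in Q, complYoung Φ (|g x| / r) with hAdef
  set c : ℝ := (A / volume Q).toReal with hcdef
  have hc : 0 ≤ c := ENNReal.toReal_nonneg
  have hdivne : A / volume Q ≠ ∞ := (ENNReal.div_lt_top hA hQ0).ne
  have hofc : ENNReal.ofReal c = A / volume Q := ENNReal.ofReal_toReal hdivne
  have h1c : (0:ℝ) < 1 + c := by linarith
  have hvolmul : volume Q * ENNReal.ofReal (1 + c) = volume Q + A := by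
    rw [ENNReal.ofReal_add zero_le_one hc, ENNReal.ofReal_one, mul_add, mul_one, hofc,
      ENNReal.mul_div_cancel hQ0 hQt]
  have hmem : ENNReal.ofReal (r * (1 + c)) ∈
      {l : ℝ≥0∞ | ∃ r' : ℝ, 0 < r' ∧ l = ENNReal.ofReal r' ∧
        (volume Q)⁻¹ * ∫⁻ x in Q, complYoung Φ (|g x| / r') ≤ 1} := by
    refine ⟨r * (1 + c), mul_pos hr h1c, rfl, ?_⟩
    have hpt : ∀ x, complYoung Φ (|g x| / (r * (1 + c))) ≤
        complYoung Φ (|g x| / r) / ENNReal.ofReal (1 + c) := by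
      intro x
      have : |g x| / (r * (1 + c)) = (|g x| / r) / (1 + c) := by
        field_simp
      rw [this]
      exact complYoung_div_le Φ hΦ _ hc
    have hint : (∫⁻ x in Q, complYoung Φ (|g x| / (r * (1 + c)))) ≤
        A / ENNReal.ofReal (1 + c) := by
      calc (∫⁻ x in Q, complYoung Φ (|g x| / (r * (1 + c))))
          ≤ ∫⁻ x in Q, complYoung Φ (|g x| / r) / ENNReal.ofReal (1 + c) :=
            lintegral_mono hpt
        _ = ∫⁻ x in Q, complYoung Φ (|g x| / r) * (ENNReal.ofReal (1 + c))⁻¹ := by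
            simp [div_eq_mul_inv]
        _ = A * (ENNReal.ofReal (1 + c))⁻¹ :=
            lintegral_mul_const' _ _ (by
              simp [ENNReal.inv_ne_top, ENNReal.ofReal_pos.2 h1c |>.ne'])
        _ = A / ENNReal.ofReal (1 + c) := by rw [div_eq_mul_inv]
    have hle : A / ENNReal.ofReal (1 + c) ≤ volume Q := by
      rw [ENNReal.div_le_iff (by simp [ENNReal.ofReal_pos.2 h1c |>.ne']) ENNReal.ofReal_ne_top,
        hvolmul]
      exact le_add_self
    calc (volume Q)⁻¹ * ∫⁻ x in Q, complYoung Φ (|g x| / (r * (1 + c)))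
        ≤ (volume Q)⁻¹ * volume Q := by
          exact mul_le_mul_right (hint.trans hle) _
      _ = 1 := ENNReal.inv_mul_cancel hQ0 hQt
  have hlux : luxNormOnE (complYoung Φ) Q g ≤ ENNReal.ofReal (r * (1 + c)) :=
    sInf_le hmem
  calc volume Q * luxNormOnE (complYoung Φ) Q g
      ≤ volume Q * ENNReal.ofReal (r * (1 + c)) := mul_le_mul_right hlux _
    _ = ENNReal.ofReal r * (volume Q * ENNReal.ofReal (1 + c)) := by
        rw [ENNReal.ofReal_mul hr.le]; ring
    _ = ENNReal.ofReal r * (volume Q + A) := by rw [hvolmul]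

/-- For a Young function `Φ` with complementary function `Φ̄`, a dyadic
cube `Q₀` and a collection `𝒯` of pairwise disjoint dyadic cubes partitioning `Q₀`,
`∑_{Q ∈ 𝒯} |Q| · ‖g‖_{Φ̄;Q} ≤ 2 |Q₀| · ‖g‖_{Φ̄;Q₀}`. -/
theorem partition_sum_luxNorm_le
    (n : ℕ) (hn : 0 < n)
    (Φ : ℝ → ℝ)
    (hconv : ConvexOn ℝ (Set.Ici (0:ℝ)) Φ)
    (hmono : MonotoneOn Φ (Set.Ici (0:ℝ)))
    (hleft : ∀ t : ℝ, 0 < t → ContinuousWithinAt Φ (Set.Iic t) t)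
    (h0 : Φ 0 = 0)
    (htop : Tendsto Φ atTop atTop)
    (k₀ : ℤ) (j₀ : Fin n → ℤ)
    (𝒯 : Set (ℤ × (Fin n → ℤ)))
    (hdisj : 𝒯.PairwiseDisjoint fun q => dyadicCube n q.1 q.2)
    (hpart : ⋃ q ∈ 𝒯, dyadicCube n q.1 q.2 = dyadicCube n k₀ j₀)
    (g : (Fin n → ℝ) → ℝ) (hg : Measurable g) :
    ∑' q : 𝒯, volume (dyadicCube n q.1.1 q.1.2) *
        luxNormOnE (complYoung Φ) (dyadicCube n q.1.1 q.1.2) g ≤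
      2 * volume (dyadicCube n k₀ j₀) *
        luxNormOnE (complYoung Φ) (dyadicCube n k₀ j₀) g := by
  have hΦ : ∀ t : ℝ, 0 ≤ t → 0 ≤ Φ t := fun t ht => by
    simpa [h0] using hmono (le_refl (0:ℝ)) ht ht
  set Q₀ := dyadicCube n k₀ j₀ with hQ₀
  have hQ₀0 : volume Q₀ ≠ 0 := volume_dyadicCube_ne_zero n k₀ j₀
  have hQ₀t : volume Q₀ ≠ ∞ := volume_dyadicCube_ne_top n k₀ j₀
  set L : ℝ≥0∞ := ∑' q : 𝒯, volume (dyadicCube n q.1.1 q.1.2) *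
        luxNormOnE (complYoung Φ) (dyadicCube n q.1.1 q.1.2) g with hL
  -- the key estimate for each admissible r
  have key : ∀ r : ℝ, 0 < r →
      (volume Q₀)⁻¹ * (∫⁻ x in Q₀, complYoung Φ (|g x| / r)) ≤ 1 →
      L ≤ 2 * volume Q₀ * ENNReal.ofReal r := by
    intro r hr hcond
    have hInt : (∫⁻ x in Q₀, complYoung Φ (|g x| / r)) ≤ volume Q₀ := by
      have := mul_le_mul_right hcond (volume Q₀)
      rwa [← mul_assoc, ENNReal.mul_inv_cancel hQ₀0 hQ₀t, one_mul, mul_one] at this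
    have hIntne : (∫⁻ x in Q₀, complYoung Φ (|g x| / r)) ≠ ∞ :=
      (hInt.trans_lt (lt_of_le_of_ne le_top hQ₀t)).ne
    have hsub : ∀ q : 𝒯, dyadicCube n q.1.1 q.1.2 ⊆ Q₀ := by
      intro q
      have h := Set.subset_biUnion_of_mem (u := fun q => dyadicCube n q.1 q.2) q.2
      rw [hpart] at h
      exact h
    have hterm : ∀ q : 𝒯, volume (dyadicCube n q.1.1 q.1.2) *
        luxNormOnE (complYoung Φ) (dyadicCube n q.1.1 q.1.2) g ≤
        ENNReal.ofReal r * (volume (dyadicCube n q.1.1 q.1.2) +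
          ∫⁻ x in dyadicCube n q.1.1 q.1.2, complYoung Φ (|g x| / r)) := by
      intro q
      refine cube_bound Φ hΦ _ (volume_dyadicCube_ne_zero _ _ _)
        (volume_dyadicCube_ne_top _ _ _) g r hr ?_
      exact (lt_of_le_of_lt (lintegral_mono_set (hsub q))
        (hIntne.lt_top.trans_le le_rfl)).ne
    have hd : Pairwise (Function.onFun Disjoint fun q : 𝒯 => dyadicCube n q.1.1 q.1.2) := by
      have := (pairwise_subtype_iff_pairwise_set 𝒯
        (fun a b => Disjoint (dyadicCube n a.1 a.2) (dyadicCube n b.1 b.2))).2 hdisj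
      exact fun a b hab => this hab
    have hm : ∀ q : 𝒯, MeasurableSet (dyadicCube n q.1.1 q.1.2) :=
      fun q => measurableSet_dyadicCube _ _ _
    have hUnion : ⋃ q : 𝒯, dyadicCube n q.1.1 q.1.2 = Q₀ := by
      simp only [Set.iUnion_coe_set]
      exact hpart
    have hvolsum : ∑' q : 𝒯, volume (dyadicCube n q.1.1 q.1.2) = volume Q₀ := by
      rw [← hUnion, measure_iUnion hd hm]
    have hintsum : ∑' q : 𝒯, (∫⁻ x in dyadicCube n q.1.1 q.1.2, complYoung Φ (|g x| / r))
        = ∫⁻ x in Q₀, complYoung Φ (|g x| / r) := by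
      rw [← hUnion, lintegral_iUnion hm hd]
    calc L ≤ ∑' q : 𝒯, ENNReal.ofReal r * (volume (dyadicCube n q.1.1 q.1.2) +
          ∫⁻ x in dyadicCube n q.1.1 q.1.2, complYoung Φ (|g x| / r)) :=
          ENNReal.tsum_le_tsum hterm
      _ = ENNReal.ofReal r * ∑' q : 𝒯, (volume (dyadicCube n q.1.1 q.1.2) +
          ∫⁻ x in dyadicCube n q.1.1 q.1.2, complYoung Φ (|g x| / r)) :=
          ENNReal.tsum_mul_left
      _ = ENNReal.ofReal r * (volume Q₀ + ∫⁻ x in Q₀, complYoung Φ (|g x| / r)) := by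
          rw [ENNReal.tsum_add, hvolsum, hintsum]
      _ ≤ ENNReal.ofReal r * (volume Q₀ + volume Q₀) := by gcongr
      _ = 2 * volume Q₀ * ENNReal.ofReal r := by ring
  -- Pass to the infimum
  have h2v0 : 2 * volume Q₀ ≠ 0 := by simp [hQ₀0]
  have h2vt : 2 * volume Q₀ ≠ ∞ := ENNReal.mul_ne_top (by norm_num) hQ₀t
  have hdivle : L / (2 * volume Q₀) ≤ luxNormOnE (complYoung Φ) Q₀ g := by
    refine le_sInf fun l hl => ?_
    obtain ⟨r, hr, rfl, hcond⟩ := hl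
    rw [ENNReal.div_le_iff h2v0 h2vt, mul_comm]
    exact key r hr hcond
  calc L = L / (2 * volume Q₀) * (2 * volume Q₀) :=
        (ENNReal.div_mul_cancel h2v0 h2vt).symm
    _ ≤ luxNormOnE (complYoung Φ) Q₀ g * (2 * volume Q₀) := mul_le_mul_left hdivle _
    _ = 2 * volume Q₀ * luxNormOnE (complYoung Φ) Q₀ g := mul_comm _ _
end

section
/- Fix 0 < d < n, let δ ∈ (0,1) solve 2^{n−d}(1−δ)^d = 1, and let F = ∑_{k≥0} 1_{E^k} where E^k is the k-th Cantor stage in Q₀ = [0,1)^n. Fix λ₀ > 0 with Λ₀ := e^{1/λ₀}(1−δ)^n < 1. Then for every λ > λ₀, ∫_{Q₀} (e^{F(x)/λ} − 1) dx ≤ (1/λ)·e^{1/λ₀}/(1 − Λ₀). -/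
open Set Filter MeasureTheory
open scoped ENNReal Pointwise

lemma cantor_ptwise_aux {α : Type*} (E : ℕ → Set α) (hanti : Antitone E)
    (x : α) (hx : x ∈ E 0) (lam : ℝ) (hlam : 0 < lam) :
    ∑' l : ℕ,
        ((∑' k : ℕ, (E k).indicator (fun _ => (1:ℝ≥0∞)) x) / ENNReal.ofReal lam)
            ^ (l + 1) / (Nat.factorial (l + 1) : ℝ≥0∞) ≤
      ∑' k : ℕ, (E k).indicator
        (fun _ => ENNReal.ofReal (Real.exp ((k + 1) / lam) - Real.exp (k / lam))) x := by
  classical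
  have hstep : ∀ k : ℕ, Real.exp (1 / lam) - 1 ≤ Real.exp (((k : ℝ) + 1) / lam) - Real.exp (k / lam) := by
    intro k
    have h1 : Real.exp (((k : ℝ) + 1) / lam) = Real.exp ((k : ℝ) / lam) * Real.exp (1 / lam) := by
      rw [← Real.exp_add]; ring_nf
    have h2 : (1 : ℝ) ≤ Real.exp ((k : ℝ) / lam) := Real.one_le_exp (by positivity)
    have h3 : (1 : ℝ) ≤ Real.exp (1 / lam) := Real.one_le_exp (by positivity)
    nlinarith
  by_cases hall : ∀ k, x ∈ E k
  · have : (∑' k : ℕ, (E k).indicator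
        (fun _ => ENNReal.ofReal (Real.exp ((k + 1) / lam) - Real.exp (k / lam))) x) = ⊤ := by
      refine top_unique ?_
      have h0 : (0:ℝ) < Real.exp (1/lam) - 1 := by
        have := Real.add_one_le_exp (1/lam); have : (1:ℝ)/lam > 0 := by positivity
        nlinarith [Real.add_one_le_exp (1/lam)]
      calc (⊤:ℝ≥0∞) = ∑' _ : ℕ, ENNReal.ofReal (Real.exp (1/lam) - 1) :=
            (ENNReal.tsum_const_eq_top_of_ne_zero (ENNReal.ofReal_pos.2 h0).ne').symm
        _ ≤ _ := by
            refine ENNReal.tsum_le_tsum fun k => ?_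
            rw [Set.indicator_of_mem (hall k)]
            exact ENNReal.ofReal_le_ofReal (hstep k)
    rw [this]; exact le_top
  · push_neg at hall
    set m := Nat.find hall with hm
    have hxm : ∀ j, x ∈ E j ↔ j < m := by
      intro j
      constructor
      · intro hj
        by_contra h
        push_neg at h
        exact Nat.find_spec hall (hanti h hj)
      · intro hj
        have := Nat.find_min hall hj
        exact not_not.mp this
    have hF : (∑' k : ℕ, (E k).indicator (fun _ => (1:ℝ≥0∞)) x) = m := by
      rw [tsum_eq_sum (s := Finset.range m)
        (fun k hk => Set.indicator_of_notMem
          (fun hx' => hk (Finset.mem_range.2 ((hxm k).1 hx'))) _)]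
      rw [Finset.sum_congr rfl fun k hk =>
        Set.indicator_of_mem ((hxm k).2 (Finset.mem_range.1 hk)) _]
      simp
    set y : ℝ := (m : ℝ) / lam with hy
    have hy0 : 0 ≤ y := by positivity
    have hFdiv : ((m : ℝ≥0∞) / ENNReal.ofReal lam) = ENNReal.ofReal y := by
      rw [hy, ENNReal.ofReal_div_of_pos hlam, ENNReal.ofReal_natCast]
    have hterm : ∀ l : ℕ, (ENNReal.ofReal y) ^ (l+1) / ((Nat.factorial (l+1) : ℝ≥0∞))
        = ENNReal.ofReal (y ^ (l+1) / (Nat.factorial (l+1) : ℝ)) := by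
      intro l
      rw [← ENNReal.ofReal_pow hy0, ← ENNReal.ofReal_natCast (Nat.factorial (l+1)),
        ← ENNReal.ofReal_div_of_pos (by positivity)]
    have hsum : Summable (fun l : ℕ => y ^ (l+1) / (Nat.factorial (l+1) : ℝ)) := by
      have := Real.summable_pow_div_factorial y
      exact (summable_nat_add_iff 1).2 this
    have htsum_le : (∑' l : ℕ, y ^ (l+1) / (Nat.factorial (l+1) : ℝ)) ≤ Real.exp y - 1 := by
      refine Summable.tsum_le_of_sum_range_le hsum fun N => ?_
      have h1 : (∑ i ∈ Finset.range (N+1), y ^ i / (Nat.factorial i : ℝ))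
          = (∑ l ∈ Finset.range N, y ^ (l+1) / (Nat.factorial (l+1) : ℝ)) + 1 := by
        rw [Finset.sum_range_succ']
        simp
      have h2 := Real.sum_le_exp_of_nonneg hy0 (N+1)
      linarith
    have hRHS : (∑' k : ℕ, (E k).indicator
        (fun _ => ENNReal.ofReal (Real.exp ((k + 1) / lam) - Real.exp (k / lam))) x)
        = ENNReal.ofReal (Real.exp y - 1) := by
      rw [tsum_eq_sum (s := Finset.range m)
        (fun k hk => Set.indicator_of_notMem
          (fun hx' => hk (Finset.mem_range.2 ((hxm k).1 hx'))) _)]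
      rw [Finset.sum_congr rfl fun k hk =>
        Set.indicator_of_mem ((hxm k).2 (Finset.mem_range.1 hk)) _]
      rw [← ENNReal.ofReal_sum_of_nonneg (fun k _ => by linarith [hstep k, Real.one_le_exp (le_of_lt (by positivity : (0:ℝ) < 1/lam))])]
      congr 1
      have : ∀ k ∈ Finset.range m, Real.exp (((k:ℝ) + 1) / lam) - Real.exp ((k:ℝ) / lam)
          = (fun j : ℕ => Real.exp ((j:ℝ)/lam)) (k+1) - (fun j : ℕ => Real.exp ((j:ℝ)/lam)) k := by
        intro k _; push_cast; ring_nf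
      rw [Finset.sum_congr rfl this, Finset.sum_range_sub (fun j : ℕ => Real.exp ((j:ℝ)/lam))]
      simp [hy]
    calc ∑' l : ℕ, ((∑' k : ℕ, (E k).indicator (fun _ => (1:ℝ≥0∞)) x) / ENNReal.ofReal lam)
            ^ (l + 1) / (Nat.factorial (l + 1) : ℝ≥0∞)
        = ∑' l : ℕ, ENNReal.ofReal (y ^ (l+1) / (Nat.factorial (l+1) : ℝ)) := by
          rw [hF, hFdiv]; exact tsum_congr hterm
      _ = ENNReal.ofReal (∑' l : ℕ, y ^ (l+1) / (Nat.factorial (l+1) : ℝ)) :=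
          (ENNReal.ofReal_tsum_of_nonneg (fun l => by positivity) hsum).symm
      _ ≤ ENNReal.ofReal (Real.exp y - 1) := ENNReal.ofReal_le_ofReal htsum_le
      _ = _ := hRHS.symm


/-- Let `δ ∈ (0,1)` solve `2^(n−d)(1−δ)^d = 1`, let `E k` be the Cantor
stages in `Q₀ = [0,1)ⁿ` and `F = ∑_{k≥0} 1_{E k}`.  Fix `λ₀ > 0` with
`Λ₀ := e^{1/λ₀} (1−δ)^n < 1`.  Then for every `λ > λ₀`,
`∫_{Q₀} (e^{F/λ} − 1) dx ≤ (1/λ) e^{1/λ₀} / (1 − Λ₀)`, where the integrand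
`e^{F/λ} − 1` is written as the series `∑_{l ≥ 1} (F/λ)^l / l!` (in `[0,∞]`). -/
theorem cantor_exp_integral_bound
    (n : ℕ) (hn : 0 < n) (d δ : ℝ)
    (hd0 : 0 < d) (hdn : d < n)
    (hδ0 : 0 < δ) (hδ1 : δ < 1)
    (hsol : (2:ℝ) ^ ((n:ℝ) - d) * (1 - δ) ^ d = 1)
    (E : ℕ → Set (Fin n → ℝ))
    (hE0 : E 0 = Set.univ.pi fun _ => Set.Ico (0:ℝ) 1)
    (hErec : ∀ k : ℕ, E (k+1) =
      ⋃ ε : Fin n → Bool,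
        (fun x i => ((1 - δ) / 2) * x i +
          (if ε i then 1 - (1 - δ) / 2 else 0)) '' E k)
    (lam₀ lam : ℝ) (hlam₀ : 0 < lam₀)
    (hΛ₀ : Real.exp (1 / lam₀) * (1 - δ) ^ n < 1)
    (hlam : lam₀ < lam) :
    ∫⁻ x in (Set.univ.pi fun _ => Set.Ico (0:ℝ) 1),
        ∑' l : ℕ,
          ((∑' k : ℕ, (E k).indicator (fun _ => (1:ℝ≥0∞)) x) / ENNReal.ofReal lam)
              ^ (l + 1) / (Nat.factorial (l + 1) : ℝ≥0∞) ≤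
      ENNReal.ofReal
        ((1 / lam) * Real.exp (1 / lam₀) / (1 - Real.exp (1 / lam₀) * (1 - δ) ^ n)) := by
    classical
  set c : ℝ := (1 - δ) / 2 with hc
  have hc0 : 0 < c := by rw [hc]; linarith
  have hc1 : c < 1 := by rw [hc]; linarith
  -- rewrite the affine image
  have himg : ∀ (b : Fin n → ℝ) (s : Set (Fin n → ℝ)),
      (fun x i => c * x i + b i) '' s = (fun y => y + b) '' (c • s) := by
    intro b s
    rw [← Set.image_smul, Set.image_image]
    rfl
  have hmeasim : ∀ (b : Fin n → ℝ) (s : Set (Fin n → ℝ)), MeasurableSet s →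
      MeasurableSet ((fun x i => c * x i + b i) '' s) := by
    intro b s hs
    rw [himg, Set.image_add_right]
    exact (measurable_add_const (-b)) (hs.const_smul_of_ne_zero hc0.ne')
  have hEmeas : ∀ k, MeasurableSet (E k) := by
    intro k
    induction k with
    | zero => rw [hE0]; exact MeasurableSet.univ_pi fun i => measurableSet_Ico
    | succ k ih =>
      rw [hErec k]
      exact MeasurableSet.iUnion fun ε => hmeasim _ _ ih
  have hvolim : ∀ (b : Fin n → ℝ) (s : Set (Fin n → ℝ)),
      volume ((fun x i => c * x i + b i) '' s) = ENNReal.ofReal (c ^ n) * volume s := by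
    intro b s
    rw [himg, Set.image_add_right, measure_preimage_add_right,
      Measure.addHaar_smul_of_nonneg volume hc0.le,
      Module.finrank_fin_fun]
  have hsub : ∀ k, E (k+1) ⊆ E k := by
    intro k
    induction k with
    | zero =>
      rw [hErec 0, hE0]
      rintro y hy
      simp only [Set.mem_iUnion, Set.mem_image] at hy
      obtain ⟨ε, x, hx, rfl⟩ := hy
      intro i _
      have hxi : x i ∈ Set.Ico (0:ℝ) 1 := hx i (Set.mem_univ i)
      obtain ⟨hx0, hx1⟩ := hxi
      constructor
      · dsimp only
        split <;> nlinarith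
      · dsimp only
        split <;> nlinarith
    | succ k ih =>
      rw [hErec (k+1)]
      refine Set.iUnion_subset fun ε => ?_
      refine (Set.image_mono ih).trans ?_
      rw [hErec k]
      exact Set.subset_iUnion (fun ε : Fin n → Bool => (fun x i => c * x i + if ε i = true then 1 - c else 0) '' E k) ε
  have hanti : Antitone E := antitone_nat_of_succ_le hsub
  have hvol : ∀ k, volume (E k) ≤ ENNReal.ofReal (((1 - δ) ^ n) ^ k) := by
    intro k
    induction k with
    | zero =>
      rw [hE0, pow_zero]
      rw [volume_pi_pi]
      simp [Real.volume_Ico]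
    | succ k ih =>
      rw [hErec k]
      calc volume (⋃ ε : Fin n → Bool, (fun x i => c * x i + (if ε i then 1 - c else 0)) '' E k)
          ≤ ∑' ε : Fin n → Bool, volume ((fun x i => c * x i + (if ε i then 1 - c else 0)) '' E k) :=
            measure_iUnion_le _
        _ = ∑' ε : Fin n → Bool, ENNReal.ofReal (c ^ n) * volume (E k) := by
            refine tsum_congr fun ε => hvolim _ _
        _ ≤ ∑' ε : Fin n → Bool, ENNReal.ofReal (c ^ n) * ENNReal.ofReal (((1 - δ) ^ n) ^ k) := by
            exact ENNReal.tsum_le_tsum fun ε => mul_le_mul_right ih _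
        _ = (2^n : ℕ) * (ENNReal.ofReal (c ^ n) * ENNReal.ofReal (((1 - δ) ^ n) ^ k)) := by
            rw [tsum_fintype, Finset.sum_const, Finset.card_univ]
            simp [Fintype.card_fun, nsmul_eq_mul]
        _ = ENNReal.ofReal (((1 - δ) ^ n) ^ (k+1)) := by
            rw [← ENNReal.ofReal_mul (by positivity), ← ENNReal.ofReal_natCast (2^n),
              ← ENNReal.ofReal_mul (by positivity)]
            congr 1
            have h2c : (2:ℝ)^n * c^n = (1-δ)^n := by
              rw [← mul_pow]; congr 1; rw [hc]; ring
            push_cast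
            rw [← mul_assoc, h2c, ← pow_succ']
  -- the integration chain
  have hlamp : 0 < lam := hlam₀.trans hlam
  set A : ℝ := (1 - δ) ^ n with hA
  set Λ : ℝ := Real.exp (1 / lam) * A with hΛ
  have hA0 : (0:ℝ) ≤ A := by rw [hA]; exact pow_nonneg (by linarith) n
  have hexple : Real.exp (1 / lam) ≤ Real.exp (1 / lam₀) :=
    Real.exp_le_exp.2 (one_div_le_one_div_of_le hlam₀ hlam.le)
  have hΛle : Λ ≤ Real.exp (1 / lam₀) * A := mul_le_mul_of_nonneg_right hexple hA0
  have hΛ1 : Λ < 1 := lt_of_le_of_lt hΛle hΛ₀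
  have hΛnn : (0:ℝ) ≤ Λ := mul_nonneg (Real.exp_pos _).le hA0
  have hck : ∀ k : ℕ, (0:ℝ) ≤ Real.exp (((k:ℝ) + 1) / lam) - Real.exp ((k:ℝ) / lam) := by
    intro k
    refine sub_nonneg.2 (Real.exp_le_exp.2 ?_)
    gcongr
    · linarith
  have hgmeas : Measurable (fun x : Fin n → ℝ => ∑' k : ℕ, (E k).indicator
      (fun _ => ENNReal.ofReal (Real.exp ((k + 1) / lam) - Real.exp (k / lam))) x) :=
    Measurable.ennreal_tsum fun k => measurable_const.indicator (hEmeas k)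
  have hkey : Real.exp (1 / lam) - 1 ≤ 1 / lam * Real.exp (1 / lam₀) := by
    have h1 : 1 - 1 / lam ≤ Real.exp (-(1 / lam)) := by
      have := Real.add_one_le_exp (-(1 / lam)); linarith
    have h2 : Real.exp (-(1 / lam)) * Real.exp (1 / lam) = 1 := by
      rw [← Real.exp_add]; simp
    have h3 : (0:ℝ) < Real.exp (1 / lam) := Real.exp_pos _
    have h4 := mul_le_mul_of_nonneg_right h1 h3.le
    have h5 : (0:ℝ) < 1 / lam := by positivity
    nlinarith
  calc ∫⁻ x in (Set.univ.pi fun _ => Set.Ico (0:ℝ) 1),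
        ∑' l : ℕ,
          ((∑' k : ℕ, (E k).indicator (fun _ => (1:ℝ≥0∞)) x) / ENNReal.ofReal lam)
              ^ (l + 1) / (Nat.factorial (l + 1) : ℝ≥0∞)
      ≤ ∫⁻ x in (Set.univ.pi fun _ => Set.Ico (0:ℝ) 1),
          ∑' k : ℕ, (E k).indicator
            (fun _ => ENNReal.ofReal (Real.exp ((k + 1) / lam) - Real.exp (k / lam))) x := by
        refine setLIntegral_mono hgmeas fun x hx => ?_
        exact cantor_ptwise_aux E hanti x (by rwa [hE0]) lam hlamp
    _ ≤ ∫⁻ x, ∑' k : ℕ, (E k).indicator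
            (fun _ => ENNReal.ofReal (Real.exp ((k + 1) / lam) - Real.exp (k / lam))) x :=
        setLIntegral_le_lintegral _ _
    _ = ∑' k : ℕ, ∫⁻ x, (E k).indicator
            (fun _ => ENNReal.ofReal (Real.exp ((k + 1) / lam) - Real.exp (k / lam))) x :=
        lintegral_tsum fun k => (measurable_const.indicator (hEmeas k)).aemeasurable
    _ = ∑' k : ℕ, ENNReal.ofReal (Real.exp ((k + 1) / lam) - Real.exp (k / lam)) * volume (E k) :=
        tsum_congr fun k => lintegral_indicator_const (hEmeas k) _
    _ ≤ ∑' k : ℕ, ENNReal.ofReal (Real.exp ((k + 1) / lam) - Real.exp (k / lam)) *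
          ENNReal.ofReal (A ^ k) :=
        ENNReal.tsum_le_tsum fun k => mul_le_mul_right (hvol k) _
    _ = ∑' k : ℕ, ENNReal.ofReal ((Real.exp (1 / lam) - 1) * Λ ^ k) := by
        refine tsum_congr fun k => ?_
        rw [← ENNReal.ofReal_mul (hck k)]
        congr 1
        have h1 : Real.exp (((k:ℝ) + 1) / lam) = Real.exp ((k:ℝ) / lam) * Real.exp (1 / lam) := by
          rw [← Real.exp_add]; ring_nf
        have h2 : Real.exp ((k:ℝ) / lam) = Real.exp (1 / lam) ^ k := by
          rw [← Real.exp_nat_mul]; ring_nf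
        rw [hΛ, h1, h2, mul_pow]
        ring
    _ = ENNReal.ofReal ((Real.exp (1 / lam) - 1) * (1 - Λ)⁻¹) := by
        rw [← ENNReal.ofReal_tsum_of_nonneg
          (fun k => mul_nonneg (by nlinarith [Real.one_le_exp (le_of_lt (show (0:ℝ) < 1/lam by positivity))]) (pow_nonneg hΛnn k))
          ((summable_geometric_of_lt_one hΛnn hΛ1).mul_left _)]
        rw [tsum_mul_left, tsum_geometric_of_lt_one hΛnn hΛ1]
    _ ≤ ENNReal.ofReal (1 / lam * Real.exp (1 / lam₀) / (1 - Real.exp (1 / lam₀) * A)) := by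
        refine ENNReal.ofReal_le_ofReal ?_
        have hd0' : (0:ℝ) < 1 - Real.exp (1 / lam₀) * A := by linarith
        have hd1 : (0:ℝ) < 1 - Λ := by linarith
        rw [div_eq_mul_inv]
        refine mul_le_mul hkey ?_ (by positivity) (by positivity)
        exact inv_anti₀ hd0' (by linarith)
end
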